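/- arXiv:2512.21449 — 5 statements merged into one kernel-verified Lean document; each statement's English description precedes it below -/
import Mathlib

section
/- Let 𝒞 be a collection of cells over a field K. Then the lattice ideal L_𝒞 is a minimal prime of the adjacent 2-minor ideal I_adj(𝒞) in S_𝒞 (that is, L_𝒞 is a prime ideal containing I_adj(𝒞), and no prime ideal strictly between I_adj(𝒞) and L_𝒞 exists). -/
open MvPolynomial

/-- The vertex set of the cell with lower-left corner `a`. -/
def cellVerts (a : ℤ × ℤ) : Finset (ℤ × ℤ) :=
  {a, a + (1, 0), a + (0, 1), a + (1, 1)}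

/-- The edges of the cell with lower-left corner `a`, recorded as ordered pairs
of their two endpoints: `{a,c}`, `{c,b}`, `{b,d}`, `{a,d}` where `b = a+(1,1)`,
`c = a+(0,1)`, `d = a+(1,0)`. -/
def cellEdges (a : ℤ × ℤ) : Finset ((ℤ × ℤ) × (ℤ × ℤ)) :=
  {(a, a + (0, 1)), (a + (0, 1), a + (1, 1)), (a + (1, 1), a + (1, 0)), (a, a + (1, 0))}

/-- The vertex set of a collection of cells; cells are recorded by their
lower-left corners. -/
def verts (C : Finset (ℤ × ℤ)) : Finset (ℤ × ℤ) :=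
  C.biUnion cellVerts

lemma mem_verts {C : Finset (ℤ × ℤ)} {a v : ℤ × ℤ} (ha : a ∈ C)
    (hv : v ∈ cellVerts a) : v ∈ verts C :=
  Finset.mem_biUnion.mpr ⟨a, ha, hv⟩

lemma corner_mem00 (a : ℤ × ℤ) : a ∈ cellVerts a := by simp [cellVerts]
lemma corner_mem10 (a : ℤ × ℤ) : a + (1, 0) ∈ cellVerts a := by simp [cellVerts]
lemma corner_mem01 (a : ℤ × ℤ) : a + (0, 1) ∈ cellVerts a := by simp [cellVerts]
lemma corner_mem11 (a : ℤ × ℤ) : a + (1, 1) ∈ cellVerts a := by simp [cellVerts]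

/-- The adjacent 2-minor ideal `I_adj(𝒞)` of a collection of cells, inside the
polynomial ring `S_𝒞 = K[x_v : v ∈ V(𝒞)]`. -/
noncomputable def adjIdeal (K : Type*) [Field K] (C : Finset (ℤ × ℤ)) :
    Ideal (MvPolynomial {v // v ∈ verts C} K) :=
  Ideal.span {f | ∃ a, ∃ ha : a ∈ C,
    f = X ⟨a, mem_verts ha (corner_mem00 a)⟩ *
          X ⟨a + (1, 1), mem_verts ha (corner_mem11 a)⟩ -
        X ⟨a + (0, 1), mem_verts ha (corner_mem01 a)⟩ *
          X ⟨a + (1, 0), mem_verts ha (corner_mem10 a)⟩}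

/-- The vector `v_C = e_a + e_b - e_c - e_d ∈ ℤ^{V(𝒞)}` attached to the cell
with lower-left corner `a` (so `b = a+(1,1)`, `c = a+(0,1)`, `d = a+(1,0)`). -/
def cellVec (C : Finset (ℤ × ℤ)) (a : ℤ × ℤ) : {v // v ∈ verts C} → ℤ :=
  fun w => ((if w.1 = a then 1 else 0) + (if w.1 = a + (1, 1) then 1 else 0)
    - (if w.1 = a + (0, 1) then 1 else 0)) - (if w.1 = a + (1, 0) then 1 else 0)

/-- The lattice `Λ_𝒟 ⊆ ℤ^{V(𝒞)}` generated by the vectors `v_C`, `C ∈ 𝒟`,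
for a subcollection `𝒟` of `𝒞`. -/
def cellLattice (C : Finset (ℤ × ℤ)) (D : Set (ℤ × ℤ)) :
    AddSubgroup ({v // v ∈ verts C} → ℤ) :=
  AddSubgroup.closure {g | ∃ a ∈ D, g = cellVec C a}

/-- The lattice ideal `L_𝒟 ⊆ S_𝒞` of a subcollection `𝒟` of `𝒞`. -/
noncomputable def latticeIdeal (K : Type*) [Field K] (C : Finset (ℤ × ℤ))
    (D : Set (ℤ × ℤ)) : Ideal (MvPolynomial {v // v ∈ verts C} K) :=
  Ideal.span {f | ∃ e ∈ cellLattice C D,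
    f = (∏ w, X w ^ (e w).toNat) - ∏ w, X w ^ (-(e w)).toNat}

/-- `W ⊆ V(𝒞)` is admissible: for each cell `C ∈ 𝒞`, either `W ∩ C = ∅` or
`W ∩ C` contains an edge of `C`. -/
def Admissible (C : Finset (ℤ × ℤ)) (W : Set (ℤ × ℤ)) : Prop :=
  W ⊆ ↑(verts C) ∧ ∀ a ∈ C, (∀ v ∈ cellVerts a, v ∉ W) ∨
    ∃ e ∈ cellEdges a, e.1 ∈ W ∧ e.2 ∈ W

/-- The subcollection `𝒞_W` of cells of `𝒞` disjoint from `W`. -/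
def subcollW (C : Finset (ℤ × ℤ)) (W : Set (ℤ × ℤ)) : Set (ℤ × ℤ) :=
  {a | a ∈ C ∧ ∀ v ∈ cellVerts a, v ∉ W}

/-- The ideal `P_W(𝒞) = (x_w : w ∈ W) + L_{𝒞_W}`. -/
noncomputable def PW (K : Type*) [Field K] (C : Finset (ℤ × ℤ))
    (W : Set (ℤ × ℤ)) : Ideal (MvPolynomial {v // v ∈ verts C} K) :=
  Ideal.span {f | ∃ v : {v // v ∈ verts C}, v.1 ∈ W ∧ f = X v} +
    latticeIdeal K C (subcollW C W)

/-- The height of an ideal: the infimum of `Order.height 𝔭` over the prime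
ideals `𝔭` containing it (equivalently, over its minimal primes); for a prime
ideal this is just its height. -/
noncomputable def idealHeight {R : Type*} [CommRing R] (I : Ideal R) : ℕ∞ :=
  ⨅ p ∈ {p : PrimeSpectrum R | I ≤ p.asIdeal}, Order.height p

/-- A collection of cells is weakly connected if any two of its cells are
joined by a sequence of cells of the collection in which consecutive cells
share at least one vertex. -/
def WeaklyConnected (C : Finset (ℤ × ℤ)) : Prop :=
  ∀ a ∈ C, ∀ b ∈ C, Relation.ReflTransGen
    (fun p q => p ∈ C ∧ q ∈ C ∧ ((cellVerts p ∩ cellVerts q).Nonempty)) a b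

/-- `𝒞` contains a square tetromino. -/
def HasSquareTetromino (C : Finset (ℤ × ℤ)) : Prop :=
  ∃ a : ℤ × ℤ, a ∈ C ∧ a + (1, 0) ∈ C ∧ a + (0, 1) ∈ C ∧ a + (1, 1) ∈ C

/-- `𝒞` contains an X-pentomino. -/
def HasXPentomino (C : Finset (ℤ × ℤ)) : Prop :=
  ∃ a : ℤ × ℤ, a ∈ C ∧ a + (1, 0) ∈ C ∧ a - (1, 0) ∈ C ∧
    a + (0, 1) ∈ C ∧ a - (0, 1) ∈ C

/-- Row convexity of a collection of cells. -/
def RowConvex (C : Finset (ℤ × ℤ)) : Prop :=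
  ∀ a ∈ C, ∀ b ∈ C, a.2 = b.2 → ∀ r : ℤ, a.1 ≤ r → r ≤ b.1 → (r, a.2) ∈ C

/-- Column convexity of a collection of cells. -/
def ColConvex (C : Finset (ℤ × ℤ)) : Prop :=
  ∀ a ∈ C, ∀ b ∈ C, a.1 = b.1 → ∀ s : ℤ, a.2 ≤ s → s ≤ b.2 → (a.1, s) ∈ C

/-!
The lattice ideal of a lattice `Λ ⊆ ℤ^σ` is the kernel of the monomial map `x^d ↦ t^[d]` from the
polynomial ring to the group algebra of `ℤ^σ / Λ`. When `Λ` is saturated this quotient is a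
finitely generated torsion-free group, so its group algebra is a domain and the lattice ideal is
prime. If `Λ` is generated by `S`, the binomial of every element of `Λ`, times a suitable monomial,
lies in the ideal generated by the binomials of `S`, whereas no monomial lies in the lattice ideal;
so every prime between the two ideals contains the lattice ideal.

The cell lattice is saturated because it is the kernel of `id - P`, where
`P x = ∑_b λ_b(x) v_b` and `λ_b` sums the coordinates strictly north-east of `b`: since `v_a` is a
mixed second difference, `λ_b(v_a) = δ_ab`.
-/

section LatticeIdeal

variable {σ R : Type*} [Fintype σ] [CommRing R]

noncomputable def latticeBinomial (e : σ → ℤ) : MvPolynomial σ R :=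
  ∏ w, X w ^ (e w).toNat - ∏ w, X w ^ (-e w).toNat

noncomputable def posExp (e : σ → ℤ) : σ →₀ ℕ :=
  Finsupp.equivFunOnFinite.symm fun w => (e w).toNat

@[simp]
lemma posExp_apply (e : σ → ℤ) (w : σ) : posExp e w = (e w).toNat := rfl

lemma latticeBinomial_eq_monomial_sub (e : σ → ℤ) :
    latticeBinomial e = monomial (posExp e) (1 : R) - monomial (posExp (-e)) 1 := by
  rw [latticeBinomial, prod_X_pow, prod_X_pow]
  congr <;> ext <;> simp [Finsupp.indicator_of_mem]

lemma latticeBinomial_neg (e : σ → ℤ) :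
    latticeBinomial (-e) = -(latticeBinomial e : MvPolynomial σ R) := by
  rw [latticeBinomial_eq_monomial_sub, latticeBinomial_eq_monomial_sub, neg_neg, neg_sub]

lemma latticeBinomial_zero : latticeBinomial (0 : σ → ℤ) = (0 : MvPolynomial σ R) := by
  rw [latticeBinomial_eq_monomial_sub, neg_zero, sub_self]

lemma monomial_sub_monomial_eq (a b : σ →₀ ℕ) :
    monomial a (1 : R) - monomial b 1 =
      monomial (a ⊓ b) 1 * latticeBinomial fun w => (a w : ℤ) - b w := by
  have hpos : a ⊓ b + posExp (fun w => (a w : ℤ) - b w) = a := by ext w; simp; omega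
  have hneg : a ⊓ b + posExp (-fun w => (a w : ℤ) - b w) = b := by ext w; simp; omega
  rw [latticeBinomial_eq_monomial_sub, mul_sub, monomial_mul, monomial_mul, one_mul, hpos, hneg]

end LatticeIdeal

section Fibres

variable {σ R G : Type*} [CommRing R]

lemma mem_span_monomial_sub_of_mapDomain_eq_zero (π : (σ →₀ ℕ) → G) {f : MvPolynomial σ R}
    (hf : AddMonoidAlgebra.mapDomain π f = 0) :
    f ∈ Ideal.span {p | ∃ a b, π a = π b ∧ p = monomial a 1 - monomial b 1} := by
  classical
  set rep : (σ →₀ ℕ) → σ →₀ ℕ := fun d => Function.invFun π (π d)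
  have hrep : ∀ d, π (rep d) = π d := fun d => Function.invFun_eq ⟨d, rfl⟩
  have hfibre : ∀ d ∈ f.support, ∑ d' ∈ f.support with π d' = π d, coeff d' f = 0 := by
    intro d _
    have := congrArg (fun x : AddMonoidAlgebra R G => x.coeff (π d)) hf
    simp only [AddMonoidAlgebra.coeff_mapDomain, Finsupp.mapDomain_apply_eq_sum,
      AddMonoidAlgebra.coeff_zero, Finsupp.coe_zero, Pi.zero_apply] at this
    exact this
  have hrep_sum : ∑ d ∈ f.support, monomial (rep d) (coeff d f) = 0 := by
    rw [← Finset.sum_fiberwise_of_maps_to (fun d hd => Finset.mem_image_of_mem π hd)]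
    refine Finset.sum_eq_zero fun g hg => ?_
    obtain ⟨d, hd, rfl⟩ := Finset.mem_image.mp hg
    rw [Finset.sum_congr rfl fun d' hd' => by rw [show rep d' = rep d from
      congrArg (Function.invFun π) (Finset.mem_filter.mp hd').2], ← map_sum, hfibre d hd,
      map_zero]
  have hf_eq : f = ∑ d ∈ f.support, C (coeff d f) * (monomial d 1 - monomial (rep d) 1) := by
    simp only [mul_sub, C_mul_monomial, mul_one, Finset.sum_sub_distrib, hrep_sum, sub_zero]
    exact f.as_sum
  rw [hf_eq]
  exact Ideal.sum_mem _ fun d _ =>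
    Ideal.mul_mem_left _ _ (Ideal.subset_span ⟨d, rep d, (hrep d).symm, rfl⟩)

end Fibres

lemma QuotientAddGroup.isAddTorsionFree_of_nsmulSaturated {G : Type*} [AddCommGroup G]
    {L : AddSubgroup G} (hL : L.NSMulSaturated) : IsAddTorsionFree (G ⧸ L) where
  nsmul_right_injective n hn := by
    rintro ⟨x⟩ ⟨y⟩ hxy
    have hmem : n • (x - y) ∈ L := by
      rw [smul_sub, ← QuotientAddGroup.eq_iff_sub_mem]
      exact hxy
    exact QuotientAddGroup.eq_iff_sub_mem.mpr ((hL hmem).resolve_left hn)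

namespace AddSubgroup

variable {σ : Type*} (R : Type*) [CommRing R] (L : AddSubgroup (σ → ℤ))

noncomputable def expClass : (σ →₀ ℕ) →+ (σ → ℤ) ⧸ L :=
  (QuotientAddGroup.mk' L).comp
    (Finsupp.coeFnAddHom.comp (Finsupp.mapRange.addMonoidHom (Nat.castAddMonoidHom ℤ)))

lemma expClass_eq_iff (a b : σ →₀ ℕ) :
    L.expClass a = L.expClass b ↔ (fun w => (a w : ℤ) - b w) ∈ L := by
  simp only [expClass, AddMonoidHom.comp_apply, QuotientAddGroup.mk'_apply,
    QuotientAddGroup.eq_iff_sub_mem]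
  rfl

noncomputable def toGroupAlgebra : MvPolynomial σ R →ₐ[R] AddMonoidAlgebra R ((σ → ℤ) ⧸ L) :=
  AddMonoidAlgebra.mapDomainAlgHom R R L.expClass

lemma toGroupAlgebra_monomial (d : σ →₀ ℕ) (c : R) :
    L.toGroupAlgebra R (monomial d c) = AddMonoidAlgebra.single (L.expClass d) c := by
  rw [toGroupAlgebra, AddMonoidAlgebra.mapDomainAlgHom_apply, ← single_eq_monomial,
    AddMonoidAlgebra.mapDomain_single]

variable [Fintype σ]

noncomputable def latticeIdeal : Ideal (MvPolynomial σ R) :=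
  Ideal.span {f | ∃ e ∈ L, f = latticeBinomial e}

theorem ker_toGroupAlgebra : RingHom.ker (L.toGroupAlgebra R) = L.latticeIdeal R := by
  apply le_antisymm
  · intro f hf
    refine Ideal.span_le.mpr ?_ (mem_span_monomial_sub_of_mapDomain_eq_zero L.expClass hf)
    rintro _ ⟨a, b, hab, rfl⟩
    rw [monomial_sub_monomial_eq]
    exact Ideal.mul_mem_left _ _ (Ideal.subset_span ⟨_, (L.expClass_eq_iff a b).mp hab, rfl⟩)
  · refine Ideal.span_le.mpr ?_
    rintro _ ⟨e, he, rfl⟩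
    rw [SetLike.mem_coe, RingHom.mem_ker, latticeBinomial_eq_monomial_sub, map_sub,
      toGroupAlgebra_monomial, toGroupAlgebra_monomial, sub_eq_zero]
    congr 1
    rw [L.expClass_eq_iff]
    convert he using 1
    ext w
    simp

theorem isPrime_latticeIdeal [IsDomain R] (hL : L.NSMulSaturated) :
    (L.latticeIdeal R).IsPrime := by
  have := QuotientAddGroup.isAddTorsionFree_of_nsmulSaturated hL
  rw [← ker_toGroupAlgebra]
  exact RingHom.ker_isPrime _

lemma monomial_one_notMem_latticeIdeal [Nontrivial R] (d : σ →₀ ℕ) :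
    monomial d (1 : R) ∉ L.latticeIdeal R := by
  rw [← ker_toGroupAlgebra, RingHom.mem_ker, toGroupAlgebra_monomial,
    AddMonoidAlgebra.single_eq_zero]
  exact one_ne_zero

lemma exists_monomial_mul_mem_span {S : Set (σ → ℤ)} {e : σ → ℤ} (he : e ∈ closure S) :
    ∃ d, monomial d (1 : R) * latticeBinomial e ∈ Ideal.span (latticeBinomial '' S) := by
  induction he using closure_induction with
  | mem e he => exact ⟨0, by simpa using Ideal.subset_span (Set.mem_image_of_mem _ he)⟩
  | zero => exact ⟨0, by simp [latticeBinomial_zero]⟩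
  | neg e _ ih =>
    obtain ⟨d, hd⟩ := ih
    exact ⟨d, by simpa [latticeBinomial_neg] using hd⟩
  | add e₁ e₂ _ _ ih₁ ih₂ =>
    obtain ⟨d₁, hd₁⟩ := ih₁
    obtain ⟨d₂, hd₂⟩ := ih₂
    -- `x^{e₂⁻} (x^{e₁⁺} - x^{e₁⁻}) + x^{e₁⁺} (x^{e₂⁺} - x^{e₂⁻}) = x^{e₁⁺ + e₂⁺} - x^{e₁⁻ + e₂⁻}`
    set a := posExp e₁ + posExp e₂
    set b := posExp (-e₁) + posExp (-e₂)
    have hab : (fun w => (a w : ℤ) - b w) = e₁ + e₂ := by ext w; simp [a, b]; omega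
    have key : monomial (posExp (-e₂)) (1 : R) * latticeBinomial e₁ +
        monomial (posExp e₁) 1 * latticeBinomial e₂ =
        monomial (a ⊓ b) 1 * latticeBinomial (e₁ + e₂) := by
      rw [← hab, ← monomial_sub_monomial_eq, latticeBinomial_eq_monomial_sub,
        latticeBinomial_eq_monomial_sub]
      simp only [a, b, mul_sub, monomial_mul, one_mul, add_comm (posExp (-e₂))]
      ring
    have monomial_add_one (s t : σ →₀ ℕ) :
        monomial (s + t) (1 : R) = monomial s 1 * monomial t 1 := by
      rw [monomial_mul, one_mul]
    refine ⟨d₁ + d₂ + a ⊓ b, ?_⟩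
    have : monomial (d₁ + d₂ + a ⊓ b) (1 : R) * latticeBinomial (e₁ + e₂) =
        monomial (d₂ + posExp (-e₂)) 1 * (monomial d₁ 1 * latticeBinomial e₁) +
          monomial (d₁ + posExp e₁) 1 * (monomial d₂ 1 * latticeBinomial e₂) := by
      simp only [monomial_add_one]
      linear_combination -(monomial d₁ (1 : R) * monomial d₂ 1) * key
    rw [this]
    exact Ideal.add_mem _ (Ideal.mul_mem_left _ _ hd₁) (Ideal.mul_mem_left _ _ hd₂)

theorem latticeIdeal_mem_minimalPrimes [IsDomain R] (S : Set (σ → ℤ))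
    (hS : (closure S).NSMulSaturated) :
    (closure S).latticeIdeal R ∈ (Ideal.span (latticeBinomial '' S)).minimalPrimes := by
  have hprime := (closure S).isPrime_latticeIdeal R hS
  refine ⟨⟨hprime, Ideal.span_le.mpr ?_⟩, fun J ⟨hJ, hSJ⟩ hJL => Ideal.span_le.mpr ?_⟩
  · rintro _ ⟨e, he, rfl⟩
    exact Ideal.subset_span ⟨e, subset_closure he, rfl⟩
  · rintro _ ⟨e, he, rfl⟩
    obtain ⟨d, hd⟩ := exists_monomial_mul_mem_span R he
    refine (hJ.mem_or_mem (hSJ hd)).resolve_left fun hdJ => ?_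
    exact monomial_one_notMem_latticeIdeal R _ d (hJL hdJ)

end AddSubgroup

section Cells

variable {C : Finset (ℤ × ℤ)}

lemma latticeBinomial_cellVec (R : Type*) [CommRing R] {a : ℤ × ℤ} (ha : a ∈ C) :
    (latticeBinomial (cellVec C a) : MvPolynomial {v // v ∈ verts C} R) =
      X ⟨a, mem_verts ha (corner_mem00 a)⟩ * X ⟨a + (1, 1), mem_verts ha (corner_mem11 a)⟩ -
        X ⟨a + (0, 1), mem_verts ha (corner_mem01 a)⟩ *
          X ⟨a + (1, 0), mem_verts ha (corner_mem10 a)⟩ := by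
  have hpos : posExp (cellVec C a) = Finsupp.single ⟨a, mem_verts ha (corner_mem00 a)⟩ 1 +
      Finsupp.single ⟨a + (1, 1), mem_verts ha (corner_mem11 a)⟩ 1 := by
    ext ⟨⟨x, y⟩, _⟩
    simp only [posExp_apply, cellVec, Finsupp.add_apply, Finsupp.single_apply, Subtype.ext_iff,
      Prod.ext_iff, Prod.fst_add, Prod.snd_add]
    split_ifs <;> omega
  have hneg : posExp (-cellVec C a) =
      Finsupp.single ⟨a + (0, 1), mem_verts ha (corner_mem01 a)⟩ 1 +
      Finsupp.single ⟨a + (1, 0), mem_verts ha (corner_mem10 a)⟩ 1 := by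
    ext ⟨⟨x, y⟩, _⟩
    simp only [posExp_apply, Pi.neg_apply, cellVec, Finsupp.add_apply, Finsupp.single_apply,
      Subtype.ext_iff, Prod.ext_iff, Prod.fst_add, Prod.snd_add]
    split_ifs <;> omega
  simp only [latticeBinomial_eq_monomial_sub, hpos, hneg, X, monomial_mul, one_mul]

lemma adjIdeal_eq_span_latticeBinomial (K : Type*) [Field K] :
    adjIdeal K C =
      Ideal.span (latticeBinomial '' {g | ∃ a ∈ (C : Set (ℤ × ℤ)), g = cellVec C a}) := by
  rw [adjIdeal]
  congr 1
  ext f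
  constructor
  · rintro ⟨a, ha, rfl⟩
    exact ⟨cellVec C a, ⟨a, ha, rfl⟩, latticeBinomial_cellVec K ha⟩
  · rintro ⟨_, ⟨a, ha, rfl⟩, rfl⟩
    exact ⟨a, ha, latticeBinomial_cellVec K ha⟩

variable (C) in
noncomputable def quadrantSum (b : ℤ × ℤ) : ({v // v ∈ verts C} → ℤ) →ₗ[ℤ] ℤ :=
  ∑ w with b.1 < w.1.1 ∧ b.2 < w.1.2, LinearMap.proj w

lemma quadrantSum_cellVec {a : ℤ × ℤ} (ha : a ∈ C) (b : ℤ × ℤ) :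
    quadrantSum C b (cellVec C a) = if a = b then 1 else 0 := by
  have hcorner : ∀ p ∈ verts C, ∑ w : {v // v ∈ verts C} with b.1 < w.1.1 ∧ b.2 < w.1.2,
      (if w.1 = p then 1 else 0 : ℤ) = if b.1 < p.1 ∧ b.2 < p.2 then 1 else 0 := by
    intro p hp
    rw [Finset.sum_filter, Fintype.sum_eq_single ⟨p, hp⟩]
    · simp
    · intro w hw
      simp [show w.1 ≠ p from fun h => hw (Subtype.ext h)]
  simp only [quadrantSum, LinearMap.sum_apply, LinearMap.coe_proj, Function.eval, cellVec,
    Finset.sum_sub_distrib, Finset.sum_add_distrib,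
    hcorner _ (mem_verts ha (corner_mem00 a)), hcorner _ (mem_verts ha (corner_mem11 a)),
    hcorner _ (mem_verts ha (corner_mem01 a)), hcorner _ (mem_verts ha (corner_mem10 a))]
  obtain ⟨a₁, a₂⟩ := a
  obtain ⟨b₁, b₂⟩ := b
  simp only [Prod.mk_add_mk, Prod.mk.injEq]
  split_ifs <;> omega

variable (C) in
noncomputable def cellProj : ({v // v ∈ verts C} → ℤ) →ₗ[ℤ] {v // v ∈ verts C} → ℤ :=
  ∑ b ∈ C, (quadrantSum C b).smulRight (cellVec C b)

lemma cellProj_cellVec {a : ℤ × ℤ} (ha : a ∈ C) : cellProj C (cellVec C a) = cellVec C a := by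
  simp [cellProj, quadrantSum_cellVec ha, ha]

variable (C) in
lemma cellLattice_eq_ker : cellLattice C C = (LinearMap.id - cellProj C).toAddMonoidHom.ker := by
  apply le_antisymm
  · refine AddSubgroup.closure_le _ |>.mpr ?_
    rintro _ ⟨a, ha, rfl⟩
    simp [cellProj_cellVec ha]
  · intro x hx
    have hx : x = cellProj C x := (sub_eq_zero.mp hx)
    rw [hx, cellProj, LinearMap.sum_apply]
    refine sum_mem fun b hb => zsmul_mem ?_ _
    exact AddSubgroup.subset_closure ⟨b, hb, rfl⟩

variable (C) in
lemma cellLattice_nsmulSaturated : (cellLattice C C).NSMulSaturated := by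
  rw [cellLattice_eq_ker]
  exact AddSubmonoid.ker_saturated _

end Cells

theorem stmt_0_general (K : Type*) [Field K] (C : Finset (ℤ × ℤ)) :
    latticeIdeal K C ↑C ∈ (adjIdeal K C).minimalPrimes := by
  rw [adjIdeal_eq_span_latticeBinomial]
  exact AddSubgroup.latticeIdeal_mem_minimalPrimes K _ (cellLattice_nsmulSaturated C)

/-- The lattice ideal `L_𝒞` is a minimal prime of the adjacent
2-minor ideal `I_adj(𝒞)`. -/
theorem stmt_0 (K : Type*) [Field K] (C : Finset (ℤ × ℤ)) (hC : C.Nonempty) :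
    latticeIdeal K C ↑C ∈ (adjIdeal K C).minimalPrimes :=
  stmt_0_general K C
end

section
/- Let 𝒞 be a collection of cells. The vectors v_C ∈ ℤ^{V(𝒞)}, for C ∈ 𝒞, are linearly independent over ℤ; equivalently, the subgroup Λ_𝒞 of ℤ^{V(𝒞)} generated by {v_C : C ∈ 𝒞} is a free abelian group of rank |𝒞|. -/
open MvPolynomial

/-- The vectors `v_C`, `C ∈ 𝒞`, are linearly independent over
`ℤ`; equivalently `Λ_𝒞` is free abelian of rank `|𝒞|`. -/
theorem stmt_2 (C : Finset (ℤ × ℤ)) (hC : C.Nonempty) :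
    LinearIndependent ℤ (fun a : {a // a ∈ C} => cellVec C a.1) := by
  rw [linearIndependent_iff]
  intro l hl
  by_contra hne
  obtain ⟨a, ha, hmax⟩ := Finset.exists_max_image l.support
    (fun b : {a // a ∈ C} => b.1.1 + b.1.2) (Finsupp.support_nonempty_iff.mpr hne)
  have hw : a.1 + (1, 1) ∈ verts C := mem_verts a.2 (corner_mem11 a.1)
  have h0 := congrFun (congrArg (fun f => (f : {v // v ∈ verts C} → ℤ)) hl)
    ⟨a.1 + (1, 1), hw⟩
  rw [Finsupp.linearCombination_apply, Finsupp.sum] at h0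
  simp only [Finset.sum_apply, Pi.zero_apply] at h0
  have key : ∀ b ∈ l.support, b ≠ a →
      (l b • cellVec C b.1) ⟨a.1 + (1, 1), hw⟩ = 0 := by
    intro b hb hba
    have hsum : b.1.1 + b.1.2 ≤ a.1.1 + a.1.2 := hmax b hb
    have hb1 : a.1 + ((1 : ℤ), (1 : ℤ)) ≠ b.1 := by
      intro h; rw [Prod.ext_iff] at h
      simp only [Prod.fst_add, Prod.snd_add] at h; omega
    have hb2 : a.1 + ((1 : ℤ), (1 : ℤ)) ≠ b.1 + (1, 1) := by
      intro h
      exact hba (Subtype.ext ((add_right_cancel h.symm)))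
    have hb3 : a.1 + ((1 : ℤ), (1 : ℤ)) ≠ b.1 + (0, 1) := by
      intro h; rw [Prod.ext_iff] at h
      simp only [Prod.fst_add, Prod.snd_add] at h; omega
    have hb4 : a.1 + ((1 : ℤ), (1 : ℤ)) ≠ b.1 + (1, 0) := by
      intro h; rw [Prod.ext_iff] at h
      simp only [Prod.fst_add, Prod.snd_add] at h; omega
    have hz : cellVec C b.1 ⟨a.1 + (1, 1), hw⟩ = 0 := by
      simp only [cellVec]
      rw [if_neg hb1, if_neg hb2, if_neg hb3, if_neg hb4]
      ring
    rw [Pi.smul_apply, hz, smul_zero]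
  rw [Finset.sum_eq_single_of_mem a ha key] at h0
  have e1 : a.1 + ((1 : ℤ), (1 : ℤ)) ≠ a.1 := by
    intro h; rw [Prod.ext_iff] at h
    simp only [Prod.fst_add, Prod.snd_add] at h; omega
  have e3 : a.1 + ((1 : ℤ), (1 : ℤ)) ≠ a.1 + (0, 1) := by
    intro h; rw [Prod.ext_iff] at h
    simp only [Prod.fst_add, Prod.snd_add] at h; omega
  have e4 : a.1 + ((1 : ℤ), (1 : ℤ)) ≠ a.1 + (1, 0) := by
    intro h; rw [Prod.ext_iff] at h
    simp only [Prod.fst_add, Prod.snd_add] at h; omega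
  have hone : cellVec C a.1 ⟨a.1 + (1, 1), hw⟩ = 1 := by
    simp only [cellVec]
    rw [if_neg e1, if_neg e3, if_neg e4]
    simp
  rw [Pi.smul_apply, hone, smul_eq_mul, mul_one] at h0
  exact (Finsupp.mem_support_iff.mp ha) h0
end

section
/- Let 𝒞 and 𝒞' be collections of cells over a field K with 𝒞' ⊂ 𝒞, and suppose that every cell A ∈ 𝒞 \ 𝒞' has at least one edge both of whose endpoints lie in V(𝒞) \ V(𝒞'). If the adjacent 2-minor ideal I_adj(𝒞') (an ideal of S_{𝒞'}) is not a radical ideal, then the adjacent 2-minor ideal I_adj(𝒞) (an ideal of S_𝒞) is not a radical ideal. -/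
open MvPolynomial

/-
If `𝒞' ⊆ 𝒞`, the ring `S_𝒞'` is a retract of `S_𝒞`: include the variables, and retract by
sending `x_v` to `0` for `v ∉ V(𝒞')`. The inclusion carries `I_adj(𝒞')` into `I_adj(𝒞)`, and the
edge hypothesis makes the retraction carry `I_adj(𝒞)` into `I_adj(𝒞')`. Hence `I_adj(𝒞')` is the
contraction of `I_adj(𝒞)`, and contractions of radical ideals are radical.
-/

theorem Ideal.comap_eq_of_leftInverse {R S : Type*} [CommRing R] [CommRing S] {ι : R →+* S}
    {π : S →+* R} (hπ : Function.LeftInverse π ι) {I : Ideal R} {J : Ideal S}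
    (hI : I ≤ J.comap ι) (hJ : J ≤ I.comap π) : J.comap ι = I := by
  refine le_antisymm (fun f hf => ?_) hI
  rw [← hπ f]
  exact hJ hf

lemma verts_mono {C C' : Finset (ℤ × ℤ)} (h : C' ⊆ C) : verts C' ⊆ verts C :=
  Finset.biUnion_subset_biUnion_of_subset_left _ h

def vertsInclusion {C C' : Finset (ℤ × ℤ)} (h : verts C' ⊆ verts C) :
    {v // v ∈ verts C'} → {v // v ∈ verts C} :=
  fun v => ⟨v.1, h v.2⟩

noncomputable def restrictVars (K : Type*) [Field K] (C C' : Finset (ℤ × ℤ)) :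
    MvPolynomial {v // v ∈ verts C} K →ₐ[K] MvPolynomial {v // v ∈ verts C'} K :=
  aeval fun w => if h : w.1 ∈ verts C' then X ⟨w.1, h⟩ else 0

section

variable {K : Type*} [Field K] {C C' : Finset (ℤ × ℤ)}

lemma restrictVars_X_of_mem {w : ℤ × ℤ} {hw : w ∈ verts C} (h : w ∈ verts C') :
    restrictVars K C C' (X ⟨w, hw⟩) = X ⟨w, h⟩ := by
  simp only [restrictVars, aeval_X, dif_pos h]

lemma restrictVars_X_of_notMem {w : ℤ × ℤ} {hw : w ∈ verts C} (h : w ∉ verts C') :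
    restrictVars K C C' (X ⟨w, hw⟩) = 0 := by
  simp only [restrictVars, aeval_X, dif_neg h]

lemma restrictVars_leftInverse_rename (h : verts C' ⊆ verts C) :
    Function.LeftInverse (restrictVars K C C') (rename (R := K) (vertsInclusion h)) := by
  intro f
  rw [restrictVars, aeval_rename]
  convert aeval_X_left_apply f
  funext v
  exact dif_pos v.2

lemma adjIdeal_le_comap_rename (h : C' ⊆ C) :
    adjIdeal K C' ≤ (adjIdeal K C).comap (rename (R := K) (vertsInclusion (verts_mono h))) := by
  refine Ideal.span_le.mpr ?_
  rintro _ ⟨a, ha, rfl⟩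
  refine Ideal.subset_span ⟨a, h ha, ?_⟩
  simp only [map_sub, map_mul, rename_X]
  rfl

/-- Every edge joins a diagonal to an anti-diagonal corner, so the retraction kills both terms of
the minor of a cell having an edge outside `V(𝒞')`. -/
lemma adjIdeal_le_comap_restrictVars
    (hedge : ∀ a ∈ C, a ∉ C' → ∃ e ∈ cellEdges a, e.1 ∉ verts C' ∧ e.2 ∉ verts C') :
    adjIdeal K C ≤ (adjIdeal K C').comap (restrictVars K C C') := by
  refine Ideal.span_le.mpr ?_
  rintro _ ⟨a, ha, rfl⟩
  by_cases ha' : a ∈ C'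
  · refine Ideal.subset_span ⟨a, ha', ?_⟩
    simp only [map_sub, map_mul, restrictVars_X_of_mem (mem_verts ha' (corner_mem00 a)),
      restrictVars_X_of_mem (mem_verts ha' (corner_mem11 a)),
      restrictVars_X_of_mem (mem_verts ha' (corner_mem01 a)),
      restrictVars_X_of_mem (mem_verts ha' (corner_mem10 a))]
  · obtain ⟨e, he, h₁, h₂⟩ := hedge a ha ha'
    simp only [cellEdges, Finset.mem_insert, Finset.mem_singleton] at he
    rcases he with rfl | rfl | rfl | rfl <;> dsimp only at h₁ h₂ <;>
      simp [restrictVars_X_of_notMem h₁, restrictVars_X_of_notMem h₂]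

end

theorem stmt_14_general (K : Type*) [Field K] (C C' : Finset (ℤ × ℤ))
    (hsub : C' ⊂ C)
    (hedge : ∀ a ∈ C, a ∉ C' → ∃ e ∈ cellEdges a,
      e.1 ∈ verts C ∧ e.1 ∉ verts C' ∧ e.2 ∈ verts C ∧ e.2 ∉ verts C')
    (hrad : (adjIdeal K C').radical ≠ adjIdeal K C') :
    (adjIdeal K C).radical ≠ adjIdeal K C := by
  have hcontr : (adjIdeal K C).comap (rename (R := K) (vertsInclusion (verts_mono hsub.1))) =
      adjIdeal K C' :=
    Ideal.comap_eq_of_leftInverse (restrictVars_leftInverse_rename _)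
      (adjIdeal_le_comap_rename hsub.1)
      (adjIdeal_le_comap_restrictVars fun a ha ha' => by
        obtain ⟨e, he, -, h₁, -, h₂⟩ := hedge a ha ha'
        exact ⟨e, he, h₁, h₂⟩)
  rw [Ne, Ideal.radical_eq_iff] at hrad ⊢
  rw [← hcontr] at hrad
  exact fun hC => hrad (hC.comap _)

/-- If `𝒞' ⊂ 𝒞` and every cell of `𝒞 \ 𝒞'` has an edge with
both endpoints in `V(𝒞) \ V(𝒞')`, then non-radicality of `I_adj(𝒞')`
implies non-radicality of `I_adj(𝒞)`. -/
theorem stmt_14 (K : Type*) [Field K] (C C' : Finset (ℤ × ℤ)) (hC' : C'.Nonempty)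
    (hsub : C' ⊂ C)
    (hedge : ∀ a ∈ C, a ∉ C' → ∃ e ∈ cellEdges a,
      e.1 ∈ verts C ∧ e.1 ∉ verts C' ∧ e.2 ∈ verts C ∧ e.2 ∉ verts C')
    (hrad : (adjIdeal K C').radical ≠ adjIdeal K C') :
    (adjIdeal K C).radical ≠ adjIdeal K C :=
  stmt_14_general K C C' hsub hedge hrad
end

section
/- Let 𝒮 be the square tetromino, i.e., the collection of the four cells with lower-left corners (1,1), (2,1), (1,2), (2,2), so that V(𝒮) = {1,2,3} × {1,2,3}. Then the adjacent 2-minor ideal I_adj(𝒮), generated in ℚ[x_{ij} : 1 ≤ i,j ≤ 3] by the four binomials x_{i,j}x_{i+1,j+1} − x_{i+1,j}x_{i,j+1} for 1 ≤ i,j ≤ 2, is not a radical ideal. -/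
open MvPolynomial

namespace Stmt15

abbrev Cs : Finset (ℤ × ℤ) := {((1 : ℤ), (1 : ℤ)), (2, 1), (1, 2), (2, 2)}
abbrev σ' := {v // v ∈ verts Cs}

def V (i j : ℤ) (h : (i, j) ∈ verts Cs := by decide) : σ' := ⟨(i, j), h⟩

noncomputable def φ (p : MvPolynomial σ' ℚ) : ℚ :=
  coeff (Finsupp.single (V 1 1) 1 + Finsupp.single (V 2 2) 1 + Finsupp.single (V 3 3) 1) p +
  coeff (Finsupp.single (V 1 1) 1 + Finsupp.single (V 2 3) 1 + Finsupp.single (V 3 2) 1) p +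
  coeff (Finsupp.single (V 1 2) 1 + Finsupp.single (V 2 1) 1 + Finsupp.single (V 3 3) 1) p

lemma X_mul_X (a b : σ') :
    (X a * X b : MvPolynomial σ' ℚ) = monomial (Finsupp.single a 1 + Finsupp.single b 1) 1 := by
  rw [X, X, monomial_mul, one_mul]

lemma XXX (a b c : σ') : (X a * X b * X c : MvPolynomial σ' ℚ) =
    monomial (Finsupp.single a 1 + Finsupp.single b 1 + Finsupp.single c 1) 1 := by
  rw [X_mul_X, X, monomial_mul, one_mul]

lemma coeff_mul_single_ne {m s : σ' →₀ ℕ} (q : MvPolynomial σ' ℚ) (v : σ')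
    (hv : m v < s v) : coeff m (q * monomial s (1 : ℚ)) = 0 := by
  rw [coeff_mul_monomial', if_neg]
  intro hle
  exact absurd (Finsupp.le_def.mp hle v) (not_le.mpr hv)

lemma coeff_mul_single_eq {m t s : σ' →₀ ℕ} (h : m = t + s) (q : MvPolynomial σ' ℚ) :
    coeff m (q * monomial s (1 : ℚ)) = coeff t q := by
  subst h; rw [coeff_mul_monomial, mul_one]

lemma finsupp_ne {m s : σ' →₀ ℕ} (v : σ') (h : m v ≠ s v) : m ≠ s :=
  fun hh => h (by rw [hh])

lemma phi_g11 (q : MvPolynomial σ' ℚ) :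
    φ (q * (X (V 1 1) * X (V 2 2) - X (V 1 2) * X (V 2 1))) = 0 := by
  rw [mul_sub, X_mul_X, X_mul_X]
  unfold φ
  simp only [coeff_sub]
  rw [coeff_mul_single_eq (m := Finsupp.single (V 1 1) 1 + Finsupp.single (V 2 2) 1 + Finsupp.single (V 3 3) 1) (t := Finsupp.single (V 3 3) 1) (s := Finsupp.single (V 1 1) 1 + Finsupp.single (V 2 2) 1) (by abel) q,
      coeff_mul_single_ne (m := Finsupp.single (V 1 1) 1 + Finsupp.single (V 2 2) 1 + Finsupp.single (V 3 3) 1) (s := Finsupp.single (V 1 2) 1 + Finsupp.single (V 2 1) 1) q (V 1 2) (by simp [V, Finsupp.single_apply, Subtype.ext_iff, Prod.ext_iff]),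
      coeff_mul_single_ne (m := Finsupp.single (V 1 1) 1 + Finsupp.single (V 2 3) 1 + Finsupp.single (V 3 2) 1) (s := Finsupp.single (V 1 1) 1 + Finsupp.single (V 2 2) 1) q (V 2 2) (by simp [V, Finsupp.single_apply, Subtype.ext_iff, Prod.ext_iff]),
      coeff_mul_single_ne (m := Finsupp.single (V 1 1) 1 + Finsupp.single (V 2 3) 1 + Finsupp.single (V 3 2) 1) (s := Finsupp.single (V 1 2) 1 + Finsupp.single (V 2 1) 1) q (V 1 2) (by simp [V, Finsupp.single_apply, Subtype.ext_iff, Prod.ext_iff]),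
      coeff_mul_single_ne (m := Finsupp.single (V 1 2) 1 + Finsupp.single (V 2 1) 1 + Finsupp.single (V 3 3) 1) (s := Finsupp.single (V 1 1) 1 + Finsupp.single (V 2 2) 1) q (V 1 1) (by simp [V, Finsupp.single_apply, Subtype.ext_iff, Prod.ext_iff]),
      coeff_mul_single_eq (m := Finsupp.single (V 1 2) 1 + Finsupp.single (V 2 1) 1 + Finsupp.single (V 3 3) 1) (t := Finsupp.single (V 3 3) 1) (s := Finsupp.single (V 1 2) 1 + Finsupp.single (V 2 1) 1) (by abel) q]
  ring

lemma phi_g12 (q : MvPolynomial σ' ℚ) :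
    φ (q * (X (V 1 2) * X (V 2 3) - X (V 1 3) * X (V 2 2))) = 0 := by
  rw [mul_sub, X_mul_X, X_mul_X]
  unfold φ
  simp only [coeff_sub]
  rw [coeff_mul_single_ne (m := Finsupp.single (V 1 1) 1 + Finsupp.single (V 2 2) 1 + Finsupp.single (V 3 3) 1) (s := Finsupp.single (V 1 2) 1 + Finsupp.single (V 2 3) 1) q (V 1 2) (by simp [V, Finsupp.single_apply, Subtype.ext_iff, Prod.ext_iff]),
      coeff_mul_single_ne (m := Finsupp.single (V 1 1) 1 + Finsupp.single (V 2 2) 1 + Finsupp.single (V 3 3) 1) (s := Finsupp.single (V 1 3) 1 + Finsupp.single (V 2 2) 1) q (V 1 3) (by simp [V, Finsupp.single_apply, Subtype.ext_iff, Prod.ext_iff]),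
      coeff_mul_single_ne (m := Finsupp.single (V 1 1) 1 + Finsupp.single (V 2 3) 1 + Finsupp.single (V 3 2) 1) (s := Finsupp.single (V 1 2) 1 + Finsupp.single (V 2 3) 1) q (V 1 2) (by simp [V, Finsupp.single_apply, Subtype.ext_iff, Prod.ext_iff]),
      coeff_mul_single_ne (m := Finsupp.single (V 1 1) 1 + Finsupp.single (V 2 3) 1 + Finsupp.single (V 3 2) 1) (s := Finsupp.single (V 1 3) 1 + Finsupp.single (V 2 2) 1) q (V 1 3) (by simp [V, Finsupp.single_apply, Subtype.ext_iff, Prod.ext_iff]),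
      coeff_mul_single_ne (m := Finsupp.single (V 1 2) 1 + Finsupp.single (V 2 1) 1 + Finsupp.single (V 3 3) 1) (s := Finsupp.single (V 1 2) 1 + Finsupp.single (V 2 3) 1) q (V 2 3) (by simp [V, Finsupp.single_apply, Subtype.ext_iff, Prod.ext_iff]),
      coeff_mul_single_ne (m := Finsupp.single (V 1 2) 1 + Finsupp.single (V 2 1) 1 + Finsupp.single (V 3 3) 1) (s := Finsupp.single (V 1 3) 1 + Finsupp.single (V 2 2) 1) q (V 1 3) (by simp [V, Finsupp.single_apply, Subtype.ext_iff, Prod.ext_iff])]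
  ring

lemma phi_g21 (q : MvPolynomial σ' ℚ) :
    φ (q * (X (V 2 1) * X (V 3 2) - X (V 2 2) * X (V 3 1))) = 0 := by
  rw [mul_sub, X_mul_X, X_mul_X]
  unfold φ
  simp only [coeff_sub]
  rw [coeff_mul_single_ne (m := Finsupp.single (V 1 1) 1 + Finsupp.single (V 2 2) 1 + Finsupp.single (V 3 3) 1) (s := Finsupp.single (V 2 1) 1 + Finsupp.single (V 3 2) 1) q (V 2 1) (by simp [V, Finsupp.single_apply, Subtype.ext_iff, Prod.ext_iff]),
      coeff_mul_single_ne (m := Finsupp.single (V 1 1) 1 + Finsupp.single (V 2 2) 1 + Finsupp.single (V 3 3) 1) (s := Finsupp.single (V 2 2) 1 + Finsupp.single (V 3 1) 1) q (V 3 1) (by simp [V, Finsupp.single_apply, Subtype.ext_iff, Prod.ext_iff]),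
      coeff_mul_single_ne (m := Finsupp.single (V 1 1) 1 + Finsupp.single (V 2 3) 1 + Finsupp.single (V 3 2) 1) (s := Finsupp.single (V 2 1) 1 + Finsupp.single (V 3 2) 1) q (V 2 1) (by simp [V, Finsupp.single_apply, Subtype.ext_iff, Prod.ext_iff]),
      coeff_mul_single_ne (m := Finsupp.single (V 1 1) 1 + Finsupp.single (V 2 3) 1 + Finsupp.single (V 3 2) 1) (s := Finsupp.single (V 2 2) 1 + Finsupp.single (V 3 1) 1) q (V 3 1) (by simp [V, Finsupp.single_apply, Subtype.ext_iff, Prod.ext_iff]),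
      coeff_mul_single_ne (m := Finsupp.single (V 1 2) 1 + Finsupp.single (V 2 1) 1 + Finsupp.single (V 3 3) 1) (s := Finsupp.single (V 2 1) 1 + Finsupp.single (V 3 2) 1) q (V 3 2) (by simp [V, Finsupp.single_apply, Subtype.ext_iff, Prod.ext_iff]),
      coeff_mul_single_ne (m := Finsupp.single (V 1 2) 1 + Finsupp.single (V 2 1) 1 + Finsupp.single (V 3 3) 1) (s := Finsupp.single (V 2 2) 1 + Finsupp.single (V 3 1) 1) q (V 3 1) (by simp [V, Finsupp.single_apply, Subtype.ext_iff, Prod.ext_iff])]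
  ring

lemma phi_g22 (q : MvPolynomial σ' ℚ) :
    φ (q * (X (V 2 2) * X (V 3 3) - X (V 2 3) * X (V 3 2))) = 0 := by
  rw [mul_sub, X_mul_X, X_mul_X]
  unfold φ
  simp only [coeff_sub]
  rw [coeff_mul_single_eq (m := Finsupp.single (V 1 1) 1 + Finsupp.single (V 2 2) 1 + Finsupp.single (V 3 3) 1) (t := Finsupp.single (V 1 1) 1) (s := Finsupp.single (V 2 2) 1 + Finsupp.single (V 3 3) 1) (by abel) q,
      coeff_mul_single_ne (m := Finsupp.single (V 1 1) 1 + Finsupp.single (V 2 2) 1 + Finsupp.single (V 3 3) 1) (s := Finsupp.single (V 2 3) 1 + Finsupp.single (V 3 2) 1) q (V 2 3) (by simp [V, Finsupp.single_apply, Subtype.ext_iff, Prod.ext_iff]),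
      coeff_mul_single_ne (m := Finsupp.single (V 1 1) 1 + Finsupp.single (V 2 3) 1 + Finsupp.single (V 3 2) 1) (s := Finsupp.single (V 2 2) 1 + Finsupp.single (V 3 3) 1) q (V 2 2) (by simp [V, Finsupp.single_apply, Subtype.ext_iff, Prod.ext_iff]),
      coeff_mul_single_eq (m := Finsupp.single (V 1 1) 1 + Finsupp.single (V 2 3) 1 + Finsupp.single (V 3 2) 1) (t := Finsupp.single (V 1 1) 1) (s := Finsupp.single (V 2 3) 1 + Finsupp.single (V 3 2) 1) (by abel) q,
      coeff_mul_single_ne (m := Finsupp.single (V 1 2) 1 + Finsupp.single (V 2 1) 1 + Finsupp.single (V 3 3) 1) (s := Finsupp.single (V 2 2) 1 + Finsupp.single (V 3 3) 1) q (V 2 2) (by simp [V, Finsupp.single_apply, Subtype.ext_iff, Prod.ext_iff]),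
      coeff_mul_single_ne (m := Finsupp.single (V 1 2) 1 + Finsupp.single (V 2 1) 1 + Finsupp.single (V 3 3) 1) (s := Finsupp.single (V 2 3) 1 + Finsupp.single (V 3 2) 1) q (V 2 3) (by simp [V, Finsupp.single_apply, Subtype.ext_iff, Prod.ext_iff])]
  ring


lemma phi_add (p r : MvPolynomial σ' ℚ) : φ (p + r) = φ p + φ r := by
  unfold φ; simp only [coeff_add]; ring

noncomputable def J : Ideal (MvPolynomial σ' ℚ) where
  carrier := {p | ∀ q, φ (q * p) = 0}
  add_mem' := by
    intro a b ha hb q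
    rw [mul_add, phi_add, ha q, hb q, add_zero]
  zero_mem' := by
    intro q
    rw [mul_zero]
    unfold φ
    simp
  smul_mem' := by
    intro c x hx q
    rw [smul_eq_mul, ← mul_assoc]
    exact hx (q * c)

lemma adj_le_J : adjIdeal ℚ Cs ≤ J := by
  rw [adjIdeal, Ideal.span_le]
  rintro f ⟨a, ha, rfl⟩
  fin_cases ha
  · exact fun q => phi_g11 q
  · exact fun q => phi_g21 q
  · exact fun q => phi_g12 q
  · exact fun q => phi_g22 q

noncomputable def u : MvPolynomial σ' ℚ :=
  X (V 2 2) * X (V 1 1) * X (V 3 3) - X (V 2 2) * X (V 1 3) * X (V 3 1)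

lemma u_sq_mem : u ^ 2 ∈ adjIdeal ℚ Cs := by
  have h11 : (X (V 1 1) * X (V 2 2) - X (V 1 2) * X (V 2 1) : MvPolynomial σ' ℚ) ∈
      adjIdeal ℚ Cs := Ideal.subset_span ⟨((1 : ℤ), (1 : ℤ)), by decide, rfl⟩
  have h12 : (X (V 1 2) * X (V 2 3) - X (V 1 3) * X (V 2 2) : MvPolynomial σ' ℚ) ∈
      adjIdeal ℚ Cs := Ideal.subset_span ⟨((1 : ℤ), (2 : ℤ)), by decide, rfl⟩
  have h21 : (X (V 2 1) * X (V 3 2) - X (V 2 2) * X (V 3 1) : MvPolynomial σ' ℚ) ∈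
      adjIdeal ℚ Cs := Ideal.subset_span ⟨((2 : ℤ), (1 : ℤ)), by decide, rfl⟩
  have h22 : (X (V 2 2) * X (V 3 3) - X (V 2 3) * X (V 3 2) : MvPolynomial σ' ℚ) ∈
      adjIdeal ℚ Cs := Ideal.subset_span ⟨((2 : ℤ), (2 : ℤ)), by decide, rfl⟩
  have key : u ^ 2 =
      (-(2 : MvPolynomial σ' ℚ) * (X (V 1 3) * X (V 2 2) * X (V 3 1) * X (V 3 3)) +
        X (V 1 2) * X (V 2 3) * X (V 3 1) * X (V 3 3) +
        X (V 1 1) * X (V 2 2) * X (V 3 3) * X (V 3 3)) *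
          (X (V 1 1) * X (V 2 2) - X (V 1 2) * X (V 2 1)) +
      (-(X (V 1 3) * X (V 2 1) * X (V 3 1) * X (V 3 2)) +
        X (V 1 2) * X (V 2 1) * X (V 3 1) * X (V 3 3)) *
          (X (V 1 2) * X (V 2 3) - X (V 1 3) * X (V 2 2)) +
      (-(X (V 1 3) * X (V 1 3) * X (V 2 2) * X (V 3 1)) +
        X (V 1 1) * X (V 1 2) * X (V 2 3) * X (V 3 3)) *
          (X (V 2 1) * X (V 3 2) - X (V 2 2) * X (V 3 1)) +
      (-(X (V 1 2) * X (V 1 3) * X (V 2 1) * X (V 3 1)) +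
        X (V 1 1) * X (V 1 2) * X (V 2 1) * X (V 3 3)) *
          (X (V 2 2) * X (V 3 3) - X (V 2 3) * X (V 3 2)) := by
    unfold u; ring
  rw [key]
  exact add_mem (add_mem (add_mem (Ideal.mul_mem_left _ _ h11) (Ideal.mul_mem_left _ _ h12))
    (Ideal.mul_mem_left _ _ h21)) (Ideal.mul_mem_left _ _ h22)

lemma phi_u : φ u = 1 := by
  unfold u φ
  rw [XXX, XXX]
  simp only [coeff_sub, coeff_monomial]
  rw [if_pos (show Finsupp.single (V 2 2) 1 + Finsupp.single (V 1 1) 1 + Finsupp.single (V 3 3) 1 = Finsupp.single (V 1 1) 1 + Finsupp.single (V 2 2) 1 + Finsupp.single (V 3 3) 1 from by abel),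
      if_neg (finsupp_ne (m := Finsupp.single (V 2 2) 1 + Finsupp.single (V 1 3) 1 + Finsupp.single (V 3 1) 1) (s := Finsupp.single (V 1 1) 1 + Finsupp.single (V 2 2) 1 + Finsupp.single (V 3 3) 1) (V 1 3) (by simp [V, Finsupp.single_apply, Subtype.ext_iff, Prod.ext_iff])),
      if_neg (finsupp_ne (m := Finsupp.single (V 2 2) 1 + Finsupp.single (V 1 1) 1 + Finsupp.single (V 3 3) 1) (s := Finsupp.single (V 1 1) 1 + Finsupp.single (V 2 3) 1 + Finsupp.single (V 3 2) 1) (V 2 2) (by simp [V, Finsupp.single_apply, Subtype.ext_iff, Prod.ext_iff])),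
      if_neg (finsupp_ne (m := Finsupp.single (V 2 2) 1 + Finsupp.single (V 1 3) 1 + Finsupp.single (V 3 1) 1) (s := Finsupp.single (V 1 1) 1 + Finsupp.single (V 2 3) 1 + Finsupp.single (V 3 2) 1) (V 1 3) (by simp [V, Finsupp.single_apply, Subtype.ext_iff, Prod.ext_iff])),
      if_neg (finsupp_ne (m := Finsupp.single (V 2 2) 1 + Finsupp.single (V 1 1) 1 + Finsupp.single (V 3 3) 1) (s := Finsupp.single (V 1 2) 1 + Finsupp.single (V 2 1) 1 + Finsupp.single (V 3 3) 1) (V 1 1) (by simp [V, Finsupp.single_apply, Subtype.ext_iff, Prod.ext_iff])),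
      if_neg (finsupp_ne (m := Finsupp.single (V 2 2) 1 + Finsupp.single (V 1 3) 1 + Finsupp.single (V 3 1) 1) (s := Finsupp.single (V 1 2) 1 + Finsupp.single (V 2 1) 1 + Finsupp.single (V 3 3) 1) (V 1 3) (by simp [V, Finsupp.single_apply, Subtype.ext_iff, Prod.ext_iff]))]
  norm_num

end Stmt15


/-- The adjacent 2-minor ideal of the square tetromino (cells
with lower-left corners `(1,1), (2,1), (1,2), (2,2)`) over `ℚ` is not
radical. -/
theorem stmt_15 :
    (adjIdeal ℚ ({((1 : ℤ), (1 : ℤ)), (2, 1), (1, 2), (2, 2)} : Finset (ℤ × ℤ))).radical ≠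
      adjIdeal ℚ ({((1 : ℤ), (1 : ℤ)), (2, 1), (1, 2), (2, 2)} : Finset (ℤ × ℤ)) := by
  intro h
  have hrad : Stmt15.u ∈
      (adjIdeal ℚ ({((1 : ℤ), (1 : ℤ)), (2, 1), (1, 2), (2, 2)} : Finset (ℤ × ℤ))).radical :=
    ⟨2, Stmt15.u_sq_mem⟩
  rw [h] at hrad
  have h0 : Stmt15.φ Stmt15.u = 0 := by
    have := Stmt15.adj_le_J hrad (1 : MvPolynomial Stmt15.σ' ℚ)
    rwa [one_mul] at this
  rw [Stmt15.phi_u] at h0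
  exact one_ne_zero h0
end

section
/- Let 𝒞 be a weakly connected collection of cells over the field ℚ. If 𝒞 contains a square tetromino, then the adjacent 2-minor ideal I_adj(𝒞) is not a radical ideal. -/
open MvPolynomial

section Aux

set_option maxHeartbeats 1000000 in
set_option synthInstance.maxHeartbeats 400000 in
lemma dummy_aux : True := trivial

set_option maxHeartbeats 1000000
set_option synthInstance.maxHeartbeats 400000

open DualNumber TrivSqZeroExt

/-- The ring `ℚ[u,v]/(u²,v²)`. -/
abbrev QA : Type := DualNumber (DualNumber ℚ)

noncomputable def uu : QA := ε
noncomputable def vv : QA := TrivSqZeroExt.inl ε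

lemma uu_mul_uu : uu * uu = 0 := eps_mul_eps

lemma vv_mul_vv : vv * vv = 0 := by
  refine TrivSqZeroExt.ext ?_ ?_ <;>
    simp [vv, TrivSqZeroExt.fst_mul, TrivSqZeroExt.snd_mul]

lemma eps_ne_zero' : (ε : DualNumber ℚ) ≠ 0 := by
  intro h
  have h2 := congrArg TrivSqZeroExt.snd h
  simpa using h2

lemma uv_eq : uu * vv = TrivSqZeroExt.inr ε := by
  refine TrivSqZeroExt.ext ?_ ?_ <;>
    simp [uu, vv, TrivSqZeroExt.fst_mul, TrivSqZeroExt.snd_mul,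
      MulOpposite.smul_eq_mul_unop]

lemma uv_ne_zero : uu * vv ≠ 0 := by
  rw [uv_eq]
  intro h
  have h2 := congrArg TrivSqZeroExt.snd h
  simp only [TrivSqZeroExt.snd_inr, TrivSqZeroExt.snd_zero] at h2
  exact eps_ne_zero' h2

/-- The vertex assignment pattern, in coordinates relative to the lower-left
corner of the square tetromino. -/
noncomputable def pat : ℤ × ℤ → QA := fun t =>
  if t = (0, 0) ∨ t = (2, 2) then 1
  else if t = (1, 1) then uu * vv
  else if t = (0, 1) ∨ t = (1, 2) then uu
  else if t = (1, 0) ∨ t = (2, 1) then vv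
  else 0

lemma pat_eq_zero {t : ℤ × ℤ}
    (h : ¬(t = (0, 0) ∨ t = (2, 2) ∨ t = (1, 1) ∨ t = (0, 1) ∨ t = (1, 2) ∨
      t = (1, 0) ∨ t = (2, 1))) : pat t = 0 := by
  push_neg at h
  obtain ⟨h1, h2, h3, h4, h5, h6, h7⟩ := h
  rw [pat]
  rw [if_neg (by tauto), if_neg (by tauto), if_neg (by tauto), if_neg (by tauto)]

lemma pat_support {t : ℤ × ℤ} (h : pat t ≠ 0) :
    t = (0, 0) ∨ t = (2, 2) ∨ t = (1, 1) ∨ t = (0, 1) ∨ t = (1, 2) ∨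
      t = (1, 0) ∨ t = (2, 1) := by
  by_contra hc
  exact h (pat_eq_zero hc)

lemma pat00 : pat (0, 0) = 1 := by rw [pat]; rw [if_pos (by decide)]
lemma pat22 : pat (2, 2) = 1 := by rw [pat]; rw [if_pos (by decide)]
lemma pat11 : pat (1, 1) = uu * vv := by
  rw [pat]; rw [if_neg (by decide), if_pos (by decide)]
lemma pat01 : pat (0, 1) = uu := by
  rw [pat]; rw [if_neg (by decide), if_neg (by decide), if_pos (by decide)]
lemma pat12 : pat (1, 2) = uu := by
  rw [pat]; rw [if_neg (by decide), if_neg (by decide), if_pos (by decide)]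
lemma pat10 : pat (1, 0) = vv := by
  rw [pat]
  rw [if_neg (by decide), if_neg (by decide), if_neg (by decide),
    if_pos (by decide)]
lemma pat21 : pat (2, 1) = vv := by
  rw [pat]
  rw [if_neg (by decide), if_neg (by decide), if_neg (by decide),
    if_pos (by decide)]
lemma pat02 : pat (0, 2) = 0 := pat_eq_zero (by decide)
lemma pat20 : pat (2, 0) = 0 := pat_eq_zero (by decide)

lemma pat_key (s : ℤ × ℤ) :
    pat s * pat (s + (1, 1)) = pat (s + (0, 1)) * pat (s + (1, 0)) := by
  by_cases h00 : s = (0, 0)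
  · subst h00
    rw [show ((0, 0) : ℤ × ℤ) + (1, 1) = (1, 1) from by decide,
      show ((0, 0) : ℤ × ℤ) + (0, 1) = (0, 1) from by decide,
      show ((0, 0) : ℤ × ℤ) + (1, 0) = (1, 0) from by decide,
      pat00, pat11, pat01, pat10, one_mul]
  by_cases h10 : s = (1, 0)
  · subst h10
    rw [show ((1, 0) : ℤ × ℤ) + (1, 1) = (2, 1) from by decide,
      show ((1, 0) : ℤ × ℤ) + (0, 1) = (1, 1) from by decide,
      show ((1, 0) : ℤ × ℤ) + (1, 0) = (2, 0) from by decide,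
      pat10, pat21, pat11, pat20, vv_mul_vv, mul_zero]
  by_cases h01 : s = (0, 1)
  · subst h01
    rw [show ((0, 1) : ℤ × ℤ) + (1, 1) = (1, 2) from by decide,
      show ((0, 1) : ℤ × ℤ) + (0, 1) = (0, 2) from by decide,
      show ((0, 1) : ℤ × ℤ) + (1, 0) = (1, 1) from by decide,
      pat01, pat12, pat02, pat11, uu_mul_uu, zero_mul]
  by_cases h11 : s = (1, 1)
  · subst h11
    rw [show ((1, 1) : ℤ × ℤ) + (1, 1) = (2, 2) from by decide,
      show ((1, 1) : ℤ × ℤ) + (0, 1) = (1, 2) from by decide,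
      show ((1, 1) : ℤ × ℤ) + (1, 0) = (2, 1) from by decide,
      pat11, pat22, pat12, pat21, mul_one]
  · have hl : pat s * pat (s + (1, 1)) = 0 := by
      rcases eq_or_ne (pat s) 0 with h | h
      · rw [h, zero_mul]
      · rcases pat_support h with h' | h' | h' | h' | h' | h' | h' <;>
          first
          | exact absurd h' h00
          | exact absurd h' h10
          | exact absurd h' h01
          | exact absurd h' h11
          | (subst h'; exact mul_eq_zero_of_right _ (pat_eq_zero (by decide)))
    have hr : pat (s + (0, 1)) * pat (s + (1, 0)) = 0 := by
      rcases eq_or_ne (pat (s + (0, 1))) 0 with h | h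
      · rw [h, zero_mul]
      · rcases pat_support h with h' | h' | h' | h' | h' | h' | h' <;>
          · have hs := eq_sub_of_add_eq h'
            first
            | exact absurd (hs.trans (by decide)) h00
            | exact absurd (hs.trans (by decide)) h10
            | exact absurd (hs.trans (by decide)) h01
            | exact absurd (hs.trans (by decide)) h11
            | (subst hs; exact mul_eq_zero_of_right _ (pat_eq_zero (by decide)))
    rw [hl, hr]

lemma X_eq_X {C : Finset (ℤ × ℤ)} {x y : ℤ × ℤ} (h : x = y) (hx : x ∈ verts C)
    (hy : y ∈ verts C) :
    (X (⟨x, hx⟩ : {v // v ∈ verts C}) : MvPolynomial {v // v ∈ verts C} ℚ) =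
      X ⟨y, hy⟩ := by subst h; rfl

end Aux

set_option maxHeartbeats 1000000
set_option synthInstance.maxHeartbeats 400000

/-- If a weakly connected collection of cells contains a square
tetromino, then `I_adj(𝒞)` over `ℚ` is not radical. -/
theorem stmt_16 (C : Finset (ℤ × ℤ)) (hC : C.Nonempty) (hwc : WeaklyConnected C)
    (hsq : HasSquareTetromino C) :
    (adjIdeal ℚ C).radical ≠ adjIdeal ℚ C := by
  obtain ⟨a0, h00c, h10c, h01c, h11c⟩ := hsq
  -- membership of the nine grid vertices
  have m00 : a0 ∈ verts C := mem_verts h00c (corner_mem00 a0)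
  have m10 : a0 + (1, 0) ∈ verts C := mem_verts h00c (corner_mem10 a0)
  have m01 : a0 + (0, 1) ∈ verts C := mem_verts h00c (corner_mem01 a0)
  have m11 : a0 + (1, 1) ∈ verts C := mem_verts h00c (corner_mem11 a0)
  have e20 : a0 + (1, 0) + (1, 0) = a0 + (2, 0) := by rw [add_assoc]; congr 1
  have e21 : a0 + (1, 0) + (1, 1) = a0 + (2, 1) := by rw [add_assoc]; congr 1
  have e11a : a0 + (1, 0) + (0, 1) = a0 + (1, 1) := by rw [add_assoc]; congr 1
  have e02 : a0 + (0, 1) + (0, 1) = a0 + (0, 2) := by rw [add_assoc]; congr 1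
  have e12 : a0 + (0, 1) + (1, 1) = a0 + (1, 2) := by rw [add_assoc]; congr 1
  have e11b : a0 + (0, 1) + (1, 0) = a0 + (1, 1) := by rw [add_assoc]; congr 1
  have e22 : a0 + (1, 1) + (1, 1) = a0 + (2, 2) := by rw [add_assoc]; congr 1
  have e12b : a0 + (1, 1) + (0, 1) = a0 + (1, 2) := by rw [add_assoc]; congr 1
  have e21b : a0 + (1, 1) + (1, 0) = a0 + (2, 1) := by rw [add_assoc]; congr 1
  have m20 : a0 + (2, 0) ∈ verts C := by
    have := mem_verts h10c (corner_mem10 (a0 + (1, 0))); rwa [e20] at this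
  have m21 : a0 + (2, 1) ∈ verts C := by
    have := mem_verts h10c (corner_mem11 (a0 + (1, 0))); rwa [e21] at this
  have m02 : a0 + (0, 2) ∈ verts C := by
    have := mem_verts h01c (corner_mem01 (a0 + (0, 1))); rwa [e02] at this
  have m12 : a0 + (1, 2) ∈ verts C := by
    have := mem_verts h01c (corner_mem11 (a0 + (0, 1))); rwa [e12] at this
  have m22 : a0 + (2, 2) ∈ verts C := by
    have := mem_verts h11c (corner_mem11 (a0 + (1, 1))); rwa [e22] at this
  -- the witness polynomial g
  set g : MvPolynomial {v // v ∈ verts C} ℚ :=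
    X ⟨a0 + (1, 1), m11⟩ *
      (X ⟨a0, m00⟩ * X ⟨a0 + (2, 2), m22⟩ -
        X ⟨a0 + (0, 2), m02⟩ * X ⟨a0 + (2, 0), m20⟩) with hgdef
  -- the four adjacent 2-minors of the tetromino, in canonical form
  have hF1 : (X ⟨a0, m00⟩ * X ⟨a0 + (1, 1), m11⟩ -
      X ⟨a0 + (0, 1), m01⟩ * X ⟨a0 + (1, 0), m10⟩ :
      MvPolynomial {v // v ∈ verts C} ℚ) ∈ adjIdeal ℚ C :=
    Ideal.subset_span ⟨a0, h00c, rfl⟩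
  have hF2 : (X ⟨a0 + (1, 0), m10⟩ * X ⟨a0 + (2, 1), m21⟩ -
      X ⟨a0 + (1, 1), m11⟩ * X ⟨a0 + (2, 0), m20⟩ :
      MvPolynomial {v // v ∈ verts C} ℚ) ∈ adjIdeal ℚ C := by
    have h : (X ⟨a0 + (1, 0), mem_verts h10c (corner_mem00 (a0 + (1, 0)))⟩ *
          X ⟨a0 + (1, 0) + (1, 1), mem_verts h10c (corner_mem11 (a0 + (1, 0)))⟩ -
        X ⟨a0 + (1, 0) + (0, 1), mem_verts h10c (corner_mem01 (a0 + (1, 0)))⟩ *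
          X ⟨a0 + (1, 0) + (1, 0), mem_verts h10c (corner_mem10 (a0 + (1, 0)))⟩ :
        MvPolynomial {v // v ∈ verts C} ℚ) ∈ adjIdeal ℚ C :=
      Ideal.subset_span ⟨a0 + (1, 0), h10c, rfl⟩
    rw [X_eq_X e21 _ m21, X_eq_X e11a _ m11, X_eq_X e20 _ m20,
      X_eq_X rfl _ m10] at h
    exact h
  have hF3 : (X ⟨a0 + (0, 1), m01⟩ * X ⟨a0 + (1, 2), m12⟩ -
      X ⟨a0 + (0, 2), m02⟩ * X ⟨a0 + (1, 1), m11⟩ :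
      MvPolynomial {v // v ∈ verts C} ℚ) ∈ adjIdeal ℚ C := by
    have h : (X ⟨a0 + (0, 1), mem_verts h01c (corner_mem00 (a0 + (0, 1)))⟩ *
          X ⟨a0 + (0, 1) + (1, 1), mem_verts h01c (corner_mem11 (a0 + (0, 1)))⟩ -
        X ⟨a0 + (0, 1) + (0, 1), mem_verts h01c (corner_mem01 (a0 + (0, 1)))⟩ *
          X ⟨a0 + (0, 1) + (1, 0), mem_verts h01c (corner_mem10 (a0 + (0, 1)))⟩ :
        MvPolynomial {v // v ∈ verts C} ℚ) ∈ adjIdeal ℚ C :=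
      Ideal.subset_span ⟨a0 + (0, 1), h01c, rfl⟩
    rw [X_eq_X e12 _ m12, X_eq_X e02 _ m02, X_eq_X e11b _ m11,
      X_eq_X rfl _ m01] at h
    exact h
  have hF4 : (X ⟨a0 + (1, 1), m11⟩ * X ⟨a0 + (2, 2), m22⟩ -
      X ⟨a0 + (1, 2), m12⟩ * X ⟨a0 + (2, 1), m21⟩ :
      MvPolynomial {v // v ∈ verts C} ℚ) ∈ adjIdeal ℚ C := by
    have h : (X ⟨a0 + (1, 1), mem_verts h11c (corner_mem00 (a0 + (1, 1)))⟩ *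
          X ⟨a0 + (1, 1) + (1, 1), mem_verts h11c (corner_mem11 (a0 + (1, 1)))⟩ -
        X ⟨a0 + (1, 1) + (0, 1), mem_verts h11c (corner_mem01 (a0 + (1, 1)))⟩ *
          X ⟨a0 + (1, 1) + (1, 0), mem_verts h11c (corner_mem10 (a0 + (1, 1)))⟩ :
        MvPolynomial {v // v ∈ verts C} ℚ) ∈ adjIdeal ℚ C :=
      Ideal.subset_span ⟨a0 + (1, 1), h11c, rfl⟩
    rw [X_eq_X e22 _ m22, X_eq_X e12b _ m12, X_eq_X e21b _ m21,
      X_eq_X rfl _ m11] at h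
    exact h
  -- g² lies in the ideal
  have hg2 : g ^ 2 ∈ adjIdeal ℚ C := by
    have hid : g ^ 2 =
        ((X ⟨a0, m00⟩ * X ⟨a0 + (2, 2), m22⟩ -
            X ⟨a0 + (0, 2), m02⟩ * X ⟨a0 + (2, 0), m20⟩) *
          (X ⟨a0 + (1, 2), m12⟩ * X ⟨a0 + (2, 1), m21⟩ +
            (X ⟨a0 + (1, 1), m11⟩ * X ⟨a0 + (2, 2), m22⟩ -
              X ⟨a0 + (1, 2), m12⟩ * X ⟨a0 + (2, 1), m21⟩))) *
          (X ⟨a0, m00⟩ * X ⟨a0 + (1, 1), m11⟩ -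
            X ⟨a0 + (0, 1), m01⟩ * X ⟨a0 + (1, 0), m10⟩) +
        ((X ⟨a0, m00⟩ * X ⟨a0 + (2, 2), m22⟩ -
            X ⟨a0 + (0, 2), m02⟩ * X ⟨a0 + (2, 0), m20⟩) *
          (X ⟨a0 + (0, 1), m01⟩ * X ⟨a0 + (1, 2), m12⟩ -
            (X ⟨a0 + (0, 1), m01⟩ * X ⟨a0 + (1, 2), m12⟩ -
              X ⟨a0 + (0, 2), m02⟩ * X ⟨a0 + (1, 1), m11⟩))) *
          (X ⟨a0 + (1, 0), m10⟩ * X ⟨a0 + (2, 1), m21⟩ -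
            X ⟨a0 + (1, 1), m11⟩ * X ⟨a0 + (2, 0), m20⟩) +
        ((X ⟨a0, m00⟩ * X ⟨a0 + (2, 2), m22⟩ -
            X ⟨a0 + (0, 2), m02⟩ * X ⟨a0 + (2, 0), m20⟩) *
          (X ⟨a0 + (1, 0), m10⟩ * X ⟨a0 + (2, 1), m21⟩)) *
          (X ⟨a0 + (0, 1), m01⟩ * X ⟨a0 + (1, 2), m12⟩ -
            X ⟨a0 + (0, 2), m02⟩ * X ⟨a0 + (1, 1), m11⟩) +
        ((X ⟨a0, m00⟩ * X ⟨a0 + (2, 2), m22⟩ -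
            X ⟨a0 + (0, 2), m02⟩ * X ⟨a0 + (2, 0), m20⟩) *
          (X ⟨a0 + (0, 1), m01⟩ * X ⟨a0 + (1, 0), m10⟩)) *
          (X ⟨a0 + (1, 1), m11⟩ * X ⟨a0 + (2, 2), m22⟩ -
            X ⟨a0 + (1, 2), m12⟩ * X ⟨a0 + (2, 1), m21⟩) := by
      rw [hgdef]; ring
    rw [hid]
    exact add_mem (add_mem (add_mem (Ideal.mul_mem_left _ _ hF1)
      (Ideal.mul_mem_left _ _ hF2)) (Ideal.mul_mem_left _ _ hF3))
      (Ideal.mul_mem_left _ _ hF4)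
  -- g is not in the ideal: evaluate at the pattern
  have hgnot : g ∉ adjIdeal ℚ C := by
    intro hg
    have hker : adjIdeal ℚ C ≤ RingHom.ker
        ((aeval (fun w : {v // v ∈ verts C} => pat (w.1 - a0)) :
          MvPolynomial {v // v ∈ verts C} ℚ →ₐ[ℚ] QA) : _ →+* QA) := by
      rw [adjIdeal, Ideal.span_le]
      rintro f ⟨p, hp, rfl⟩
      rw [SetLike.mem_coe, RingHom.mem_ker]
      simp only [RingHom.coe_coe, AlgHom.coe_toRingHom, map_sub, map_mul,
        aeval_X]
      show pat (p - a0) * pat (p + (1, 1) - a0) -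
        pat (p + (0, 1) - a0) * pat (p + (1, 0) - a0) = 0
      rw [add_sub_right_comm, add_sub_right_comm, add_sub_right_comm,
        pat_key, sub_self]
    have h0 := hker hg
    rw [RingHom.mem_ker] at h0
    simp only [RingHom.coe_coe, AlgHom.coe_toRingHom] at h0
    have hval : (aeval (fun w : {v // v ∈ verts C} => pat (w.1 - a0)) :
        MvPolynomial {v // v ∈ verts C} ℚ →ₐ[ℚ] QA) g = uu * vv := by
      rw [hgdef]
      simp only [map_mul, map_sub, aeval_X]
      show pat (a0 + (1, 1) - a0) *
        (pat (a0 - a0) * pat (a0 + (2, 2) - a0) -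
          pat (a0 + (0, 2) - a0) * pat (a0 + (2, 0) - a0)) = uu * vv
      rw [sub_self, add_sub_cancel_left, add_sub_cancel_left,
        add_sub_cancel_left, add_sub_cancel_left]
      rw [show ((0 : ℤ × ℤ)) = ((0, 0) : ℤ × ℤ) from rfl]
      rw [pat11, pat00, pat22, pat02, pat20]
      ring
    rw [hval] at h0
    exact uv_ne_zero h0
  intro heq
  have hrad : g ∈ (adjIdeal ℚ C).radical := ⟨2, hg2⟩
  rw [heq] at hrad
  exact hgnot hrad
end
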